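/- The cover pebbling number of hypercubes is multiplicative over Cartesian products: for all nonnegative integers a and b, γ(Q^{a+b}) = γ(Q^a) · γ(Q^b); in particular the cover pebbling analogue of Graham's conjecture, γ(G □ H) ≤ γ(G)·γ(H), holds when G and H are hypercubes. -/

import Mathlib

open Finset

/-- A pebbling step on graph `G`: remove two pebbles from a vertex `u`,
place one pebble on an adjacent vertex `v`. -/
def PebbleStep {V : Type*} (G : SimpleGraph V) (C C' : V → ℕ) : Prop :=
  ∃ u v : V, G.Adj u v ∧ 2 ≤ C u ∧ C' u = C u - 2 ∧ C' v = C v + 1 ∧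
    ∀ x : V, x ≠ u → x ≠ v → C' x = C x

/-- A configuration is coverable if after some sequence of pebbling steps
every vertex has at least one pebble. -/
def Coverable {V : Type*} (G : SimpleGraph V) (C : V → ℕ) : Prop :=
  ∃ C' : V → ℕ, Relation.ReflTransGen (PebbleStep G) C C' ∧ ∀ v : V, 1 ≤ C' v

/-- The `d`-dimensional hypercube: vertices are binary `d`-tuples, adjacent
exactly when they differ in one coordinate. -/
def cube (d : ℕ) : SimpleGraph (Fin d → Bool) where
  Adj x y := hammingDist x y = 1
  symm := ⟨fun x y h => by rwa [hammingDist_comm]⟩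
  loopless := ⟨fun x h => by simp [hammingDist_self] at h⟩

/-- The cover pebbling number: the minimum `m` such that every configuration
of size `m` on `G` is coverable. -/
noncomputable def coverPebblingNumber {V : Type*} [Fintype V] (G : SimpleGraph V) : ℕ :=
  sInf {m : ℕ | ∀ C : V → ℕ, (∑ v, C v) = m → Coverable G C}

/-- The pebbling number: the minimum `m` such that from every configuration of
size `m` and for every target vertex, some sequence of pebbling steps places a
pebble on the target. -/
noncomputable def pebblingNumber {V : Type*} [Fintype V] (G : SimpleGraph V) : ℕ :=
  sInf {m : ℕ | ∀ (C : V → ℕ) (t : V), (∑ v, C v) = m →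
    ∃ C' : V → ℕ, Relation.ReflTransGen (PebbleStep G) C C' ∧ 1 ≤ C' t}

/-!
Pebbling steps never increase the weight `∑ v, C v * f v` whenever `f v ≤ 2 * f u` along every
edge `u v`. On `Q^d` with `f v = 2 ^ hammingDist v z` this weight is `m` for `m` pebbles on `z`
and at least `∑ v, 2 ^ hammingDist v z = 3 ^ d` once every vertex is covered, so `γ(Q^d) ≥ 3 ^ d`.

Conversely `Q^(d+1) ≅ Q^d □ K₂`, and if every configuration of size `N` on `G` is coverable then
so is every configuration of size `3N` on `G □ K₂`: while the poorer copy of `G` holds fewer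
than `N` pebbles, move one pebble across from the richer copy at the cost of two. This keeps
`s + 2 t ≥ 3N` (`s`, `t` the pebbles in the richer and the poorer copy) and the richer copy at
`N` or more, so both copies end up with `N` pebbles and can be covered separately. Hence
`γ(Q^d) = 3 ^ d`, which is multiplicative in `d`, and `Q^a □ Q^b ≅ Q^(a+b)`.
-/

open SimpleGraph

section Weight

variable {V : Type*} [Fintype V] {G : SimpleGraph V} {f : V → ℕ}

theorem PebbleStep.sum_mul_le (hf : ∀ u v, G.Adj u v → f v ≤ 2 * f u) {C C' : V → ℕ}
    (h : PebbleStep G C C') : ∑ x, C' x * f x ≤ ∑ x, C x * f x := by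
  classical
  obtain ⟨u, v, huv, hCu, hu, hv, hrest⟩ := h
  have hpoint : ∀ x, C' x * f x + (if x = u then 2 * f x else 0) =
      C x * f x + (if x = v then f x else 0) := by
    intro x
    by_cases hxu : x = u
    · subst hxu
      rw [if_pos rfl, if_neg huv.ne, hu, ← add_mul, Nat.sub_add_cancel hCu, add_zero]
    by_cases hxv : x = v
    · subst hxv
      rw [if_neg hxu, if_pos rfl, hv, add_mul, one_mul, add_zero]
    · rw [if_neg hxu, if_neg hxv, hrest x hxu hxv]
  have hsum := Finset.sum_congr rfl fun x (_ : x ∈ univ) => hpoint x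
  simp only [Finset.sum_add_distrib, Finset.sum_ite_eq', Finset.mem_univ, if_true] at hsum
  linarith [hf u v huv]

theorem PebbleStep.sum_mul_le_of_reflTransGen (hf : ∀ u v, G.Adj u v → f v ≤ 2 * f u)
    {C C' : V → ℕ} (h : Relation.ReflTransGen (PebbleStep G) C C') :
    ∑ x, C' x * f x ≤ ∑ x, C x * f x := by
  induction h with
  | refl => exact le_rfl
  | tail _ hstep ih => exact (hstep.sum_mul_le hf).trans ih

theorem Coverable.sum_le_sum_mul (hf : ∀ u v, G.Adj u v → f v ≤ 2 * f u) {C : V → ℕ}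
    (h : Coverable G C) : ∑ x, f x ≤ ∑ x, C x * f x := by
  obtain ⟨C', hreach, hcover⟩ := h
  calc ∑ x, f x ≤ ∑ x, C' x * f x :=
        Finset.sum_le_sum fun x _ => Nat.le_mul_of_pos_left _ (hcover x)
    _ ≤ ∑ x, C x * f x := PebbleStep.sum_mul_le_of_reflTransGen hf hreach

theorem Coverable.card_le_sum {C : V → ℕ} (h : Coverable G C) : Fintype.card V ≤ ∑ x, C x := by
  simpa using h.sum_le_sum_mul (f := fun _ => 1) fun _ _ _ => by norm_num

theorem card_le_of_forall_coverable {N : ℕ}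
    (hcov : ∀ C : V → ℕ, N ≤ ∑ v, C v → Coverable G C) : Fintype.card V ≤ N := by
  classical
  cases isEmpty_or_nonempty V with
  | inl _ => simp
  | inr h =>
    obtain ⟨v⟩ := h
    simpa using (hcov (Pi.single v N) (by simp)).card_le_sum

end Weight

section Iso

variable {V W : Type*} {G : SimpleGraph V} {G' : SimpleGraph W}

theorem PebbleStep.comp_iso (e : G ≃g G') {C C' : W → ℕ} (h : PebbleStep G' C C') :
    PebbleStep G (C ∘ e) (C' ∘ e) := by
  obtain ⟨u, v, huv, hCu, hu, hv, hrest⟩ := h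
  refine ⟨e.symm u, e.symm v, e.symm.map_adj_iff.2 huv, by simpa, by simpa, by simpa,
    fun x hxu hxv => hrest (e x) ?_ ?_⟩
  · rintro rfl; simp at hxu
  · rintro rfl; simp at hxv

theorem Coverable.comp_iso (e : G ≃g G') {C : W → ℕ} (h : Coverable G' C) :
    Coverable G (C ∘ e) := by
  obtain ⟨C', hreach, hcover⟩ := h
  exact ⟨C' ∘ e, hreach.lift (· ∘ e) fun _ _ => PebbleStep.comp_iso e, fun x => hcover (e x)⟩

theorem coverable_comp_iff (e : G ≃g G') {C : W → ℕ} : Coverable G (C ∘ e) ↔ Coverable G' C :=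
  ⟨fun h => by simpa [Function.comp_def] using h.comp_iso e.symm, fun h => h.comp_iso e⟩

theorem coverPebblingNumber_eq_of_iso [Fintype V] [Fintype W] (e : G ≃g G') :
    coverPebblingNumber G = coverPebblingNumber G' := by
  unfold coverPebblingNumber
  congr 1
  ext m
  refine ⟨fun h C hC => ?_, fun h C hC => ?_⟩
  · exact (coverable_comp_iff e).1 (h _ (by rw [← hC]; exact e.toEquiv.sum_comp C))
  · exact (coverable_comp_iff e.symm).1 (h _ (by rw [← hC]; exact e.symm.toEquiv.sum_comp C))

end Iso

section BoxProd

variable {V W : Type*} {G : SimpleGraph V} {H : SimpleGraph W}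

theorem exists_pebbleStep_boxProd_right [Fintype V] {b c : W} (hbc : H.Adj b c)
    {C : V × W → ℕ} {v : V} (hv : 2 ≤ C (v, b)) :
    ∃ C₁, PebbleStep (G □ H) C C₁ ∧ ∑ w, C₁ (w, b) + 2 = ∑ w, C (w, b) ∧
      ∑ w, C₁ (w, c) = ∑ w, C (w, c) + 1 := by
  classical
  have hcb : c ≠ b := hbc.ne.symm
  set C₁ : V × W → ℕ := fun p =>
    if p = (v, b) then C p - 2 else if p = (v, c) then C p + 1 else C p with hC₁
  refine ⟨C₁, ⟨(v, b), (v, c), boxProd_adj_right.2 hbc, hv, by simp [hC₁], by simp [hC₁, hcb],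
    fun p hp hp' => by simp [hC₁, hp, hp']⟩, ?_, ?_⟩
  · have hpoint : ∀ w, C₁ (w, b) + (if w = v then 2 else 0) = C (w, b) := by
      intro w
      by_cases hw : w = v
      · subst hw; simp [hC₁]; omega
      · simp [hC₁, hw]
    rw [← Finset.sum_congr rfl fun w _ => hpoint w, Finset.sum_add_distrib]
    simp
  · have hpoint : ∀ w, C₁ (w, c) = C (w, c) + (if w = v then 1 else 0) := by
      intro w
      by_cases hw : w = v
      · subst hw; simp [hC₁, hcb]
      · simp [hC₁, hw]
    rw [Finset.sum_congr rfl fun w _ => hpoint w, Finset.sum_add_distrib]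
    simp

variable [DecidableEq W]

def replaceFibre (C : V × W → ℕ) (b : W) (A : V → ℕ) : V × W → ℕ :=
  fun p => if p.2 = b then A p.1 else C p

theorem PebbleStep.lift_replaceFibre {A A' : V → ℕ} (h : PebbleStep G A A') (C : V × W → ℕ)
    (b : W) : PebbleStep (G □ H) (replaceFibre C b A) (replaceFibre C b A') := by
  obtain ⟨u, v, huv, hAu, hu, hv, hrest⟩ := h
  refine ⟨(u, b), (v, b), boxProd_adj_left.2 huv, by simpa [replaceFibre],
    by simp [replaceFibre, hu], by simp [replaceFibre, hv], ?_⟩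
  rintro ⟨x, c⟩ hxu hxv
  by_cases hc : c = b
  · subst hc
    simp [replaceFibre, hrest x (by rintro rfl; exact hxu rfl) (by rintro rfl; exact hxv rfl)]
  · simp [replaceFibre, hc]

theorem reflTransGen_replaceFibre {A A' : V → ℕ} (h : Relation.ReflTransGen (PebbleStep G) A A')
    {C : V × W → ℕ} {b : W} (hC : ∀ v, C (v, b) = A v) :
    Relation.ReflTransGen (PebbleStep (G □ H)) C (replaceFibre C b A') := by
  have hself : replaceFibre C b A = C := by
    funext ⟨v, c⟩
    by_cases hc : c = b
    · subst hc; simp [replaceFibre, hC]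
    · simp [replaceFibre, hc]
  have hlift :
      Relation.ReflTransGen (PebbleStep (G □ H)) (replaceFibre C b A) (replaceFibre C b A') :=
    h.lift (replaceFibre C b) fun _ _ hs => hs.lift_replaceFibre C b
  rwa [hself] at hlift

end BoxProd

section Doubling

variable {V : Type*} [Fintype V] {G : SimpleGraph V} {N : ℕ}

theorem coverable_boxProd_top_of_le_fibres (hcov : ∀ A : V → ℕ, N ≤ ∑ v, A v → Coverable G A)
    (C : V × Bool → ℕ) (b : Bool) (hb : N ≤ ∑ v, C (v, b)) (hnb : N ≤ ∑ v, C (v, !b)) :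
    Coverable (G □ ⊤) C := by
  obtain ⟨A, hA, hA1⟩ := hcov _ hb
  obtain ⟨B, hB, hB1⟩ := hcov _ hnb
  refine ⟨replaceFibre (replaceFibre C b A) (!b) B, ?_, ?_⟩
  · exact (reflTransGen_replaceFibre hA fun _ => rfl).trans
      (reflTransGen_replaceFibre hB fun v => by simp [replaceFibre])
  · rintro ⟨v, c⟩
    by_cases hc : c = b
    · subst hc; simp [replaceFibre, hA1]
    · obtain rfl : c = !b := by cases b <;> simpa using hc
      simp [replaceFibre, hB1]

theorem coverable_boxProd_top_of_three_mul_le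
    (hcov : ∀ A : V → ℕ, N ≤ ∑ v, A v → Coverable G A) (b : Bool) (C : V × Bool → ℕ)
    (hb : N ≤ ∑ v, C (v, b)) (hC : 3 * N ≤ ∑ v, C (v, b) + 2 * ∑ v, C (v, !b)) :
    Coverable (G □ ⊤) C := by
  -- `k` bounds the deficit `N - ∑ v, C (v, !b)` of the poorer fibre.
  suffices h : ∀ k, ∀ C : V × Bool → ℕ, N ≤ ∑ v, C (v, b) → N ≤ k + ∑ v, C (v, !b) →
      3 * N ≤ ∑ v, C (v, b) + 2 * ∑ v, C (v, !b) → Coverable (G □ ⊤) C from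
    h N C hb (by omega) hC
  intro k
  induction k with
  | zero => exact fun C hb hnb _ => coverable_boxProd_top_of_le_fibres hcov C b hb (by omega)
  | succ k ih =>
    intro C hb hnb hC
    by_cases hN : N ≤ ∑ v, C (v, !b)
    · exact coverable_boxProd_top_of_le_fibres hcov C b hb hN
    have hcard := card_le_of_forall_coverable hcov
    have hlt : ∑ _v : V, 1 < ∑ v, C (v, b) := by
      rw [Finset.sum_const, smul_eq_mul, mul_one, Finset.card_univ]
      omega
    obtain ⟨v, -, hv⟩ := Finset.exists_lt_of_sum_lt hlt
    obtain ⟨C₁, hstep, hb₁, hnb₁⟩ :=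
      exists_pebbleStep_boxProd_right (G := G) (top_adj b (!b) |>.2 (by simp)) (C := C) hv
    obtain ⟨D, hD, hD1⟩ := ih C₁ (by omega) (by omega) (by omega)
    exact ⟨D, .head hstep hD, hD1⟩

theorem coverable_boxProd_top (hcov : ∀ A : V → ℕ, N ≤ ∑ v, A v → Coverable G A)
    (C : V × Bool → ℕ) (hC : 3 * N ≤ ∑ p, C p) : Coverable (G □ ⊤) C := by
  have hsplit : ∑ p, C p = ∑ v, C (v, false) + ∑ v, C (v, true) := by
    rw [Fintype.sum_prod_type, ← Finset.sum_add_distrib]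
    simp [add_comm]
  rcases le_total (∑ v, C (v, true)) (∑ v, C (v, false)) with h | h
  · exact coverable_boxProd_top_of_three_mul_le hcov false C (by omega) (by simp; omega)
  · exact coverable_boxProd_top_of_three_mul_le hcov true C (by omega) (by simp; omega)

end Doubling

theorem hammingDist_sumElim {ι κ β : Type*} [Fintype ι] [Fintype κ] [DecidableEq β]
    (x y : ι → β) (x' y' : κ → β) :
    hammingDist (Sum.elim x x') (Sum.elim y y') = hammingDist x y + hammingDist x' y' := by
  simp only [hammingDist, Finset.card_filter, Fintype.sum_sum_type, Sum.elim_inl, Sum.elim_inr]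
  rfl

theorem hammingDist_comp_equiv {ι κ β : Type*} [Fintype ι] [Fintype κ] [DecidableEq β]
    (e : κ ≃ ι) (x y : ι → β) : hammingDist (x ∘ e) (y ∘ e) = hammingDist x y := by
  simp only [hammingDist, Finset.card_filter, Function.comp_apply]
  exact e.sum_comp fun i => if x i ≠ y i then 1 else 0

theorem sum_two_pow_hammingDist {ι : Type*} [Fintype ι] [DecidableEq ι] (z : ι → Bool) :
    ∑ x : ι → Bool, 2 ^ hammingDist x z = 3 ^ Fintype.card ι := by
  have hprod : ∀ x : ι → Bool, 2 ^ hammingDist x z = ∏ i, if x i ≠ z i then 2 else 1 := by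
    intro x
    rw [hammingDist, ← Finset.prod_const, Finset.prod_filter]
  rw [Finset.sum_congr rfl fun x _ => hprod x,
    ← Fintype.prod_sum fun i b => if b ≠ z i then 2 else 1, ← Finset.card_univ,
    ← Finset.prod_const]
  refine Finset.prod_congr rfl fun i _ => ?_
  cases z i <;> simp

@[simp]
theorem cube_adj {d : ℕ} {x y : Fin d → Bool} : (cube d).Adj x y ↔ hammingDist x y = 1 :=
  Iff.rfl

def cubeAddIso (a b : ℕ) : (cube a □ cube b) ≃g cube (a + b) where
  toEquiv := (Equiv.sumArrowEquivProdArrow (Fin a) (Fin b) Bool).symm.trans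
    (finSumFinEquiv.arrowCongr (Equiv.refl Bool))
  map_rel_iff' {p q} := by
    obtain ⟨x, y⟩ := p
    obtain ⟨x', y'⟩ := q
    change hammingDist (Sum.elim x y ∘ finSumFinEquiv.symm) (Sum.elim x' y' ∘ finSumFinEquiv.symm)
      = 1 ↔ _
    rw [hammingDist_comp_equiv, hammingDist_sumElim, boxProd_adj, cube_adj, cube_adj,
      ← hammingDist_eq_zero (x := x), ← hammingDist_eq_zero (x := y)]
    dsimp only
    omega

def cubeOneIso : cube 1 ≃g (⊤ : SimpleGraph Bool) where
  toEquiv := Equiv.funUnique (Fin 1) Bool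
  map_rel_iff' {x y} := by
    have hle : hammingDist x y ≤ 1 := hammingDist_le_card_fintype.trans (by simp)
    rw [top_adj, (Equiv.funUnique (Fin 1) Bool).injective.ne_iff, ← hammingDist_ne_zero, cube_adj]
    omega

def SimpleGraph.Iso.boxProdCongr {α β γ δ : Type*} {G₁ : SimpleGraph α} {G₂ : SimpleGraph β}
    {H₁ : SimpleGraph γ} {H₂ : SimpleGraph δ} (e : G₁ ≃g G₂) (e' : H₁ ≃g H₂) :
    (G₁ □ H₁) ≃g (G₂ □ H₂) where
  toEquiv := e.toEquiv.prodCongr e'.toEquiv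
  map_rel_iff' := by simp [e.map_adj_iff, e'.map_adj_iff, e.injective.eq_iff, e'.injective.eq_iff]

def cubeSuccIso (d : ℕ) : (cube d □ (⊤ : SimpleGraph Bool)) ≃g cube (d + 1) :=
  (Iso.boxProdCongr Iso.refl cubeOneIso.symm).trans (cubeAddIso d 1)

theorem three_pow_le_of_coverable_single {d m : ℕ} (z : Fin d → Bool)
    (h : Coverable (cube d) (Pi.single z m)) : 3 ^ d ≤ m := by
  have hf : ∀ u v, (cube d).Adj u v → 2 ^ hammingDist v z ≤ 2 * 2 ^ hammingDist u z := by
    intro u v huv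
    rw [← pow_succ']
    have := hammingDist_triangle v u z
    rw [hammingDist_comm v u, cube_adj.1 huv] at this
    exact Nat.pow_le_pow_right two_pos (by omega)
  simpa [sum_two_pow_hammingDist, Pi.single_apply] using h.sum_le_sum_mul hf

theorem coverable_cube (d : ℕ) (C : (Fin d → Bool) → ℕ) (hC : 3 ^ d ≤ ∑ x, C x) :
    Coverable (cube d) C := by
  induction d with
  | zero => exact ⟨C, .refl, fun x => by simpa [Unique.eq_default x] using hC⟩
  | succ d ih =>
    rw [← coverable_comp_iff (cubeSuccIso d)]
    refine coverable_boxProd_top ih _ ?_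
    rw [Function.comp_def, (cubeSuccIso d).bijective.sum_comp C, ← pow_succ']
    exact hC

theorem coverPebblingNumber_cube (d : ℕ) : coverPebblingNumber (cube d) = 3 ^ d :=
  IsLeast.csInf_eq ⟨fun C hC => coverable_cube d C hC.ge,
    fun _ hm => three_pow_le_of_coverable_single (fun _ => false) (hm _ (by simp))⟩

open SimpleGraph in
/-- The cover pebbling number of hypercubes is multiplicative over Cartesian
products: `γ(Q^{a+b}) = γ(Q^a) · γ(Q^b)`; in particular, the cover-pebbling
analogue of Graham's conjecture `γ(G □ H) ≤ γ(G) · γ(H)` holds when `G` and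
`H` are hypercubes. -/
theorem cover_pebbling_cube_mul (a b : ℕ) :
    coverPebblingNumber (cube (a + b))
        = coverPebblingNumber (cube a) * coverPebblingNumber (cube b) ∧
    coverPebblingNumber (cube a □ cube b)
        ≤ coverPebblingNumber (cube a) * coverPebblingNumber (cube b) := by
  have hmul : coverPebblingNumber (cube (a + b))
      = coverPebblingNumber (cube a) * coverPebblingNumber (cube b) := by
    rw [coverPebblingNumber_cube, coverPebblingNumber_cube, coverPebblingNumber_cube, pow_add]
  exact ⟨hmul, ((coverPebblingNumber_eq_of_iso (cubeAddIso a b)).trans hmul).le⟩
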